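/- arXiv:1003.0588 — 5 statements merged into one kernel-verified Lean document; each statement's English description precedes it below -/
import Mathlib

section
/- Let T be a Turing machine and suppose there exists N ∈ ℕ bounding uniformly the head positions: for every configuration x with head at position 0, all head positions along the orbit of x lie in [-N, N]. Then T is globally preperiodic: there exist q ≥ 0 and p > 0 such that T^{q+p} = T^q on all of X. -/
/-- A Turing machine with tape alphabet `A`, state set `Q`, and rule
`δ : A × Q → A × Q × {-1,1}` (the direction is encoded by a `Bool`). -/
structure TuringMachine (A Q : Type*) where
  δ : A → Q → A × Q × Bool

namespace TuringMachine

variable {A Q : Type*}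

/-- Direction of a move: `true ↦ +1`, `false ↦ -1`. -/
def dir (b : Bool) : ℤ := if b then 1 else -1

/-- A configuration: tape contents, head state, head position. -/
abbrev Config (A Q : Type*) := (ℤ → A) × Q × ℤ

/-- One step of the machine on `X = A^ℤ × Q × ℤ`. -/
def step (M : TuringMachine A Q) (c : Config A Q) : Config A Q :=
  let r := M.δ (c.1 c.2.2) c.2.1
  (Function.update c.1 c.2.2 r.1, r.2.1, c.2.2 + dir r.2.2)

/-- Head position after `t` steps. -/
def pos (M : TuringMachine A Q) (t : ℕ) (c : Config A Q) : ℤ :=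
  ((M.step)^[t] c).2.2

/-- `c` is preperiodic for the machine. -/
def Preperiodic (M : TuringMachine A Q) (c : Config A Q) : Prop :=
  ∃ m p : ℕ, 0 < p ∧ (M.step)^[m + p] c = (M.step)^[m] c

end TuringMachine


/-!
Translating a configuration commutes with the machine, so it suffices to treat configurations
with the head at `0`. For those the head never leaves the finite window `W = [-N, N]`, so the tape
outside `W` is never touched, and the state, head position and tape on `W` after `t` steps depend
only on the initial state and tape on `W`. There are finitely many such dependencies, one for each
`t`, so two times `q < q'` give the same one, and then `T^q' = T^q` on every configuration.
-/

namespace TuringMachine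

variable {A Q : Type*}

def shift (k : ℤ) (c : Config A Q) : Config A Q :=
  (fun i => c.1 (i + k), c.2.1, c.2.2 - k)

@[simp]
theorem shift_neg_shift (k : ℤ) (c : Config A Q) : shift (-k) (shift k c) = c := by
  simp [shift]

theorem step_shift (M : TuringMachine A Q) (k : ℤ) (c : Config A Q) :
    M.step (shift k c) = shift k (M.step c) := by
  obtain ⟨τ, s, h⟩ := c
  simp only [step, shift, sub_add_cancel, Prod.mk.injEq, true_and]
  refine ⟨funext fun i => ?_, by ring⟩
  simp only [Function.update_apply, eq_sub_iff_add_eq]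

theorem iterate_step_shift (M : TuringMachine A Q) (k : ℤ) (t : ℕ) (c : Config A Q) :
    M.step^[t] (shift k c) = shift k (M.step^[t] c) :=
  Function.Commute.iterate_left (fun c => M.step_shift k c) t c

theorem iterate_eq_of_forall_pos_eq_zero (M : TuringMachine A Q) {m n : ℕ}
    (h : ∀ x : Config A Q, x.2.2 = 0 → M.step^[m] x = M.step^[n] x) (x : Config A Q) :
    M.step^[m] x = M.step^[n] x := by
  have h0 : (shift x.2.2 x).2.2 = 0 := sub_self _
  calc M.step^[m] x = shift (-x.2.2) (M.step^[m] (shift x.2.2 x)) := by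
        rw [iterate_step_shift, shift_neg_shift]
    _ = shift (-x.2.2) (M.step^[n] (shift x.2.2 x)) := by rw [h _ h0]
    _ = M.step^[n] x := by rw [iterate_step_shift, shift_neg_shift]

def localView (W : Set ℤ) (c : Config A Q) : (W → A) × Q × ℤ :=
  (W.domRestrict c.1, c.2)

theorem eq_of_localView_eq {W : Set ℤ} {x y : Config A Q} (h : localView W x = localView W y)
    (hout : ∀ i ∉ W, x.1 i = y.1 i) : x = y := by
  simp only [localView, Prod.mk.injEq] at h
  refine Prod.ext (funext fun i => ?_) h.2
  by_cases hi : i ∈ W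
  · exact congrFun h.1 ⟨i, hi⟩
  · exact hout i hi

theorem localView_step_eq (M : TuringMachine A Q) {W : Set ℤ} {x y : Config A Q}
    (hx : x.2.2 ∈ W) (h : localView W x = localView W y) :
    localView W (M.step x) = localView W (M.step y) := by
  obtain ⟨τx, sx, px⟩ := x
  obtain ⟨τy, sy, py⟩ := y
  simp only [localView, Prod.mk.injEq] at h hx
  obtain ⟨hτ, rfl, rfl⟩ := h
  have hread : τx px = τy px := congrFun hτ ⟨px, hx⟩
  simp only [localView, step, hread, Prod.mk.injEq, and_true]
  funext ⟨i, hi⟩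
  simp only [Set.domRestrict_apply, Function.update_apply]
  split_ifs
  · rfl
  · exact congrFun hτ ⟨i, hi⟩

theorem localView_iterate_step_eq (M : TuringMachine A Q) {W : Set ℤ} {x y : Config A Q}
    (hx : ∀ t, M.pos t x ∈ W) (h : localView W x = localView W y) (t : ℕ) :
    localView W (M.step^[t] x) = localView W (M.step^[t] y) := by
  induction t with
  | zero => exact h
  | succ t ih =>
    rw [Function.iterate_succ_apply', Function.iterate_succ_apply']
    exact M.localView_step_eq (hx t) ih

theorem iterate_step_apply_of_notMem (M : TuringMachine A Q) {W : Set ℤ} {x : Config A Q}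
    (hx : ∀ t, M.pos t x ∈ W) {i : ℤ} (hi : i ∉ W) (t : ℕ) :
    (M.step^[t] x).1 i = x.1 i := by
  induction t with
  | zero => rfl
  | succ t ih =>
    rw [Function.iterate_succ_apply', ← ih]
    refine Function.update_of_ne ?_ _ _
    rintro rfl
    exact hi (hx t)

theorem exists_iterate_add_eq_of_pos_mem [Finite A] [Finite Q] (M : TuringMachine A Q)
    {W : Set ℤ} (hW : W.Finite) (hbd : ∀ x : Config A Q, x.2.2 = 0 → ∀ t, M.pos t x ∈ W) :
    ∃ q p, 0 < p ∧ ∀ x : Config A Q, x.2.2 = 0 → M.step^[q + p] x = M.step^[q] x := by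
  classical
  rcases isEmpty_or_nonempty A with _ | ⟨⟨a₀⟩⟩
  · exact ⟨0, 1, one_pos, fun x _ => isEmptyElim (x.1 0)⟩
  have : Finite W := hW.to_subtype
  let extend (ℓ : (W → A) × Q) : Config A Q :=
    (fun i => if h : i ∈ W then ℓ.1 ⟨i, h⟩ else a₀, ℓ.2, 0)
  let orbitView (t : ℕ) (ℓ : (W → A) × Q) : (W → A) × Q × ℤ :=
    localView W (M.step^[t] (extend ℓ))
  have hmem (t : ℕ) : orbitView t ∈ Set.univ.pi fun _ => Set.univ ×ˢ Set.univ ×ˢ W :=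
    fun ℓ _ => ⟨trivial, trivial, hbd _ rfl t⟩
  obtain ⟨q, q', hlt, heq⟩ := Set.Finite.exists_lt_map_eq_of_forall_mem hmem
    (Set.Finite.pi fun _ => Set.finite_univ.prod (Set.finite_univ.prod hW))
  refine ⟨q, q' - q, by omega, fun x hx => ?_⟩
  rw [Nat.add_sub_cancel' hlt.le]
  have hview (t : ℕ) :
      localView W (M.step^[t] x) = orbitView t (W.domRestrict x.1, x.2.1) := by
    refine M.localView_iterate_step_eq (hbd x hx) ?_ t
    refine Prod.ext (funext fun i => ?_) (Prod.ext rfl hx)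
    simp [localView, extend]
  refine eq_of_localView_eq (W := W) (by rw [hview, hview, heq]) fun i hi => ?_
  rw [M.iterate_step_apply_of_notMem (hbd x hx) hi, M.iterate_step_apply_of_notMem (hbd x hx) hi]

end TuringMachine

/-- If the head positions are uniformly bounded (for every configuration with
head initially at $0$, the orbit keeps the head in $[-N,N]$), then the machine is
globally preperiodic: $T^{q+p} = T^q$ on all of $X$. -/
theorem globally_preperiodic_of_uniformly_bounded_head
    {A Q : Type*} [Fintype A] [Fintype Q]
    (M : TuringMachine A Q) (N : ℕ)
    (hbd : ∀ x : TuringMachine.Config A Q, x.2.2 = 0 →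
      ∀ t : ℕ, M.pos t x ∈ Set.Icc (-(N : ℤ)) N) :
    ∃ q p : ℕ, 0 < p ∧ ∀ x : TuringMachine.Config A Q,
      (M.step)^[q + p] x = (M.step)^[q] x := by
  obtain ⟨q, p, hp, h⟩ := M.exists_iterate_add_eq_of_pos_mem (Set.finite_Icc _ _) hbd
  exact ⟨q, p, hp, M.iterate_eq_of_forall_pos_eq_zero h⟩
end

section
/- Let T be a Turing machine and x a configuration whose head position is bounded along its orbit. Then the trace word τ_T(Ψ(x)) ∈ (Q × A)^ℕ — the sequence of pairs (state, read symbol) at each time step — is preperiodic as a one-sided infinite word (i.e., eventually periodic). -/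
/-- The trace word of a configuration: at each time, the symbol under the head
and the current state. -/
def TuringMachine.trace {A Q : Type*} (M : TuringMachine A Q)
    (x : TuringMachine.Config A Q) (t : ℕ) : A × Q :=
  let c := (M.step)^[t] x
  (c.1 c.2.2, c.2.1)


/-!
The head only ever visits a finite set `S` of cells, so the part of a configuration that matters
for the future — the tape restricted to `S`, the state and the head position — takes finitely
many values along the orbit. By pigeonhole two times `a < b` carry the same such data, and since
the machine reads and writes only inside `S`, the two orbits stay in agreement on `S` forever;
in particular the trace word is periodic with period `b - a` from time `a` on.
-/

namespace TuringMachine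

variable {A Q : Type*}

def AgreeOn (S : Set ℤ) (c c' : Config A Q) : Prop :=
  Set.EqOn c.1 c'.1 S ∧ c.2 = c'.2

variable {M : TuringMachine A Q} {S : Set ℤ} {c c' : Config A Q}

theorem AgreeOn.step (h : AgreeOn S c c') (hc : c.2.2 ∈ S) :
    AgreeOn S (M.step c) (M.step c') := by
  obtain ⟨tape, q, i⟩ := c
  obtain ⟨tape', q', i'⟩ := c'
  obtain ⟨htape, hqi⟩ := h
  obtain ⟨rfl, rfl⟩ := Prod.ext_iff.mp hqi
  have hread : tape i = tape' i := htape hc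
  refine ⟨fun j hj => ?_, ?_⟩
  · simp only [TuringMachine.step, hread, Function.update_apply]
    split_ifs
    · rfl
    · exact htape hj
  · simp only [TuringMachine.step, hread]

theorem AgreeOn.iterate_step (h : AgreeOn S c c') (hS : ∀ t, M.pos t c ∈ S) (t : ℕ) :
    AgreeOn S (M.step^[t] c) (M.step^[t] c') := by
  induction t with
  | zero => exact h
  | succ t ih =>
    rw [Function.iterate_succ_apply', Function.iterate_succ_apply']
    exact ih.step (hS t)

theorem trace_eq_of_agreeOn {x : Config A Q} {s s' : ℕ}
    (h : AgreeOn S (M.step^[s] x) (M.step^[s'] x)) (hs : M.pos s x ∈ S) :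
    M.trace x s = M.trace x s' := by
  obtain ⟨htape, hqi⟩ := h
  simp only [TuringMachine.trace]
  rw [← hqi]
  exact Prod.ext (htape hs) rfl

theorem exists_lt_agreeOn_iterate [Finite A] [Finite Q] {x : Config A Q} (hS : S.Finite)
    (hx : ∀ t, M.pos t x ∈ S) :
    ∃ a b, a < b ∧ AgreeOn S (M.step^[a] x) (M.step^[b] x) := by
  have : Finite S := hS.to_subtype
  let data : ℕ → (S → A) × Q × S := fun t =>
    (S.domRestrict (M.step^[t] x).1, (M.step^[t] x).2.1, ⟨M.pos t x, hx t⟩)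
  obtain ⟨a, b, hab, hdata⟩ :=
    Set.finite_univ.exists_lt_map_eq_of_forall_mem (f := data) fun _ => Set.mem_univ _
  simp only [data, Prod.mk.injEq, Set.domRestrict_eq_domRestrict_iff, Subtype.mk.injEq] at hdata
  exact ⟨a, b, hab, hdata.1, Prod.ext hdata.2.1 hdata.2.2⟩

end TuringMachine

/-- If the head position along the orbit of $x$ is bounded, then the trace word
is eventually periodic. -/
theorem trace_eventually_periodic_of_bounded_head
    {A Q : Type*} [Fintype A] [Fintype Q]
    (M : TuringMachine A Q) (x : TuringMachine.Config A Q)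
    (hbd : Set.Finite {i : ℤ | ∃ t : ℕ, M.pos t x = i}) :
    ∃ m p : ℕ, 0 < p ∧ ∀ t : ℕ, m ≤ t → M.trace x (t + p) = M.trace x t := by
  set S := {i : ℤ | ∃ t : ℕ, M.pos t x = i}
  have hx : ∀ t, M.pos t x ∈ S := fun t => ⟨t, rfl⟩
  obtain ⟨a, b, hab, hagree⟩ := TuringMachine.exists_lt_agreeOn_iterate hbd hx
  have hshift : ∀ t, M.pos t (M.step^[a] x) ∈ S := fun t => by
    simpa only [TuringMachine.pos, ← Function.iterate_add_apply] using hx (t + a)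
  refine ⟨a, b - a, by omega, fun t ht => ?_⟩
  obtain ⟨s, rfl⟩ := Nat.exists_eq_add_of_le ht
  have hs : TuringMachine.AgreeOn S (M.step^[a + s] x) (M.step^[b + s] x) := by
    simpa only [← Function.iterate_add_apply, Nat.add_comm s] using hagree.iterate_step hshift s
  rw [show a + s + (b - a) = b + s by omega]
  exact (TuringMachine.trace_eq_of_agreeOn hs (hx _)).symm
end

section
/- Every context-free language over a one-letter (unary) alphabet is regular. -/
/-!
In a unary grammar only the lengths of derived words matter. Follow the heaviest child down a
derivation tree and record only the nodes where the yield strictly drops: a recorded yield `n`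
and the next one `x` satisfy `n ≤ outputBound * (x + 1)`, so a long word gives more recorded
nodes with yield in the window `(levelBound K, pumpingBound]` (`K` the number of rules) than
there are nonterminals. A nonterminal recorded twice, with yields `x < v`, derives
`x + k * (v - x)` for every `k`, and `v - x ≥ 1` precisely because only strict drops were
recorded. Hence adding `pumpingBound !` preserves membership of long words, the set of lengths
is eventually periodic, and an eventually periodic unary language has finitely many left
quotients.
-/

open scoped Nat

theorem exists_forall_ge_mem_iff_add_mem {S : Set ℕ} {N P : ℕ} (hP : 0 < P)
    (h : ∀ n ≥ N, n ∈ S → n + P ∈ S) : ∃ N', ∀ n ≥ N', n ∈ S ↔ n + P ∈ S := by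
  -- The residues `r` with `N + r + k * P ∈ S` form an increasing chain of subsets of `Fin P`.
  let F : ℕ →o Set (Fin P) :=
    ⟨fun k => {r | N + r + k * P ∈ S}, monotone_nat_of_le_succ fun k r hr => by
      simpa [Nat.succ_mul, Nat.add_assoc] using h _ (by omega) hr⟩
  obtain ⟨k₀, hk₀⟩ := WellFoundedGT.monotone_chain_condition F
  refine ⟨N + k₀ * P, fun n hn => ?_⟩
  obtain ⟨k, hk⟩ : ∃ k, n - N = (n - N) % P + k * P :=
    ⟨(n - N) / P, (Nat.mod_add_div' _ _).symm⟩
  have hkk₀ : k₀ ≤ k := by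
    by_contra! hlt
    have h₁ : (k + 1) * P ≤ k₀ * P := Nat.mul_le_mul_right P hlt
    have h₂ := Nat.mod_lt (n - N) hP
    rw [Nat.succ_mul] at h₁
    omega
  have hF : F k = F (k + 1) := (hk₀ k hkk₀).symm.trans (hk₀ (k + 1) (by omega))
  have hr := Set.ext_iff.mp hF ⟨(n - N) % P, Nat.mod_lt _ hP⟩
  simp only [F, OrderHom.coe_mk, Set.mem_ofPred_eq, Nat.succ_mul] at hr
  convert hr using 2 <;> omega

theorem Language.isRegular_of_replicate_mem_iff_add {L : Language Unit} {N P : ℕ} (hP : 0 < P)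
    (h : ∀ n ≥ N, List.replicate n () ∈ L ↔ List.replicate (n + P) () ∈ L) :
    L.IsRegular := by
  have hquot : ∀ n ≥ N,
      L.leftQuotient (List.replicate (n + P) ()) = L.leftQuotient (List.replicate n ()) := by
    intro n hn
    ext w
    obtain ⟨k, rfl⟩ : ∃ k, w = List.replicate k () :=
      ⟨w.length, List.eq_replicate_length.mpr fun _ _ => rfl⟩
    simp only [mem_leftQuotient, ← List.replicate_add]
    rw [h (n + k) (by omega), Nat.add_right_comm]
  have hrange : ∀ n, ∃ m < N + P,
      L.leftQuotient (List.replicate n ()) = L.leftQuotient (List.replicate m ()) := by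
    intro n
    induction n using Nat.strong_induction_on with
    | _ n ih =>
      by_cases hn : n < N + P
      · exact ⟨n, hn, rfl⟩
      obtain ⟨m, hm, hq⟩ := ih (n - P) (by omega)
      exact ⟨m, hm, by rw [← hq, ← hquot (n - P) (by omega), Nat.sub_add_cancel (by omega)]⟩
  apply IsRegular.of_finite_range_leftQuotient
  refine ((Set.finite_Iio (N + P)).image fun m => L.leftQuotient (List.replicate m ())).subset ?_
  rintro _ ⟨w, rfl⟩
  obtain ⟨k, rfl⟩ : ∃ k, w = List.replicate k () :=
    ⟨w.length, List.eq_replicate_length.mpr fun _ _ => rfl⟩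
  obtain ⟨m, hm, hq⟩ := hrange k
  exact ⟨m, hm, hq.symm⟩

theorem Language.isRegular_of_replicate_mem_add {L : Language Unit} {N P : ℕ} (hP : 0 < P)
    (h : ∀ n ≥ N, List.replicate n () ∈ L → List.replicate (n + P) () ∈ L) :
    L.IsRegular := by
  obtain ⟨N', hN'⟩ :=
    exists_forall_ge_mem_iff_add_mem (S := {n | List.replicate n () ∈ L}) hP h
  exact isRegular_of_replicate_mem_iff_add hP hN'

namespace ContextFreeGrammar

inductive Yields (g : ContextFreeGrammar Unit) : List (Symbol Unit g.NT) → ℕ → Prop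
  | nil : g.Yields [] 0
  | terminal {α : List (Symbol Unit g.NT)} {n : ℕ} :
      g.Yields α n → g.Yields (.terminal () :: α) (n + 1)
  | nonterminal {r : ContextFreeRule Unit g.NT} {α : List (Symbol Unit g.NT)} {m n : ℕ} :
      r ∈ g.rules → g.Yields r.output m → g.Yields α n →
      g.Yields (.nonterminal r.input :: α) (m + n)

variable {g : ContextFreeGrammar Unit} {α β : List (Symbol Unit g.NT)} {m n : ℕ}

namespace Yields

theorem append (hα : g.Yields α m) (hβ : g.Yields β n) : g.Yields (α ++ β) (m + n) := by
  induction hα with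
  | nil => simpa using hβ
  | terminal _ ih => simpa [Nat.add_right_comm] using ih.terminal
  | nonterminal hr hout _ _ ih => simpa [Nat.add_assoc] using nonterminal hr hout ih

theorem of_append (h : g.Yields (α ++ β) n) :
    ∃ m₁ m₂, n = m₁ + m₂ ∧ g.Yields α m₁ ∧ g.Yields β m₂ := by
  induction α generalizing n with
  | nil => exact ⟨0, n, by simp, nil, h⟩
  | cons s α ih =>
    cases h with
    | terminal h =>
      obtain ⟨m₁, m₂, rfl, hα, hβ⟩ := ih h
      exact ⟨m₁ + 1, m₂, by omega, hα.terminal, hβ⟩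
    | nonterminal hr hout h =>
      obtain ⟨m₁, m₂, rfl, hα, hβ⟩ := ih h
      exact ⟨_ + m₁, m₂, by omega, nonterminal hr hout hα, hβ⟩

theorem singleton {r : ContextFreeRule Unit g.NT} (hr : r ∈ g.rules) (h : g.Yields r.output n) :
    g.Yields [.nonterminal r.input] n :=
  nonterminal hr h nil

theorem exists_rule {A : g.NT} (h : g.Yields [.nonterminal A] n) :
    ∃ r ∈ g.rules, r.input = A ∧ g.Yields r.output n := by
  cases h with
  | nonterminal hr hout h => cases h; exact ⟨_, hr, rfl, hout⟩

theorem replicate (n : ℕ) : g.Yields (List.replicate n (.terminal ())) n := by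
  induction n with
  | zero => exact nil
  | succ n ih => exact ih.terminal

theorem derives (h : g.Yields α n) : g.Derives α (List.replicate n (.terminal ())) := by
  induction h with
  | nil => exact Derives.refl []
  | terminal _ ih => simpa [List.replicate_succ] using ih.append_left [.terminal ()]
  | @nonterminal r α m n hr _ _ ihout ihα =>
    have hstep : g.Produces (.nonterminal r.input :: α) (r.output ++ α) :=
      ⟨r, hr, ContextFreeRule.Rewrites.head α⟩
    rw [List.replicate_add]
    exact hstep.trans_derives ((ihout.append_right α).trans (ihα.append_left _))

theorem of_produces (hp : g.Produces α β) (h : g.Yields β n) : g.Yields α n := by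
  obtain ⟨r, hr, hrw⟩ := hp
  obtain ⟨p, q, rfl, rfl⟩ := hrw.exists_parts
  obtain ⟨_, _, rfl, hpr, hq⟩ := h.of_append
  obtain ⟨_, _, rfl, hp, hout⟩ := hpr.of_append
  exact (hp.append (singleton hr hout)).append hq

theorem of_derives (h : g.Derives α (List.replicate n (.terminal ()))) : g.Yields α n := by
  induction h using Relation.ReflTransGen.head_induction_on with
  | refl => exact replicate n
  | head hp _ ih => exact of_produces hp ih

end Yields

theorem replicate_mem_language_iff (n : ℕ) :
    List.replicate n () ∈ g.language ↔ g.Yields [.nonterminal g.initial] n := by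
  rw [mem_language_iff, List.map_replicate]
  exact ⟨Yields.of_derives, Yields.derives⟩

def outputBound (g : ContextFreeGrammar Unit) : ℕ := (g.rules.sup fun r => r.output.length) + 1

theorem length_output_lt_outputBound {r : ContextFreeRule Unit g.NT} (hr : r ∈ g.rules) :
    r.output.length < g.outputBound :=
  Nat.lt_succ_of_le (Finset.le_sup (f := fun r => r.output.length) hr)

def Embeds (B : g.NT) (α : List (Symbol Unit g.NT)) (d : ℕ) : Prop :=
  ∀ x, g.Yields [.nonterminal B] x → g.Yields α (x + d)

namespace Embeds

variable {A B C : g.NT} {d e : ℕ}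

theorem trans (h₁ : g.Embeds B [.nonterminal C] d) (h₂ : g.Embeds C α e) :
    g.Embeds B α (d + e) := fun x hx => by
  simpa [Nat.add_assoc] using h₂ _ (h₁ x hx)

theorem cons_terminal (h : g.Embeds B α d) : g.Embeds B (.terminal () :: α) (d + 1) :=
  fun x hx => (h x hx).terminal

theorem cons_nonterminal (hA : g.Yields [.nonterminal A] m) (h : g.Embeds B α d) :
    g.Embeds B (.nonterminal A :: α) (m + d) := fun x hx => by
  simpa [Nat.add_left_comm] using hA.append (h x hx)

theorem head (h : g.Yields α n) : g.Embeds A (.nonterminal A :: α) n :=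
  fun _ hx => hx.append h

theorem singleton {r : ContextFreeRule Unit g.NT} (hr : r ∈ g.rules) (h : g.Embeds B r.output d) :
    g.Embeds B [.nonterminal r.input] d :=
  fun x hx => Yields.singleton hr (h x hx)

theorem pump (h : g.Embeds A [.nonterminal A] d) (hx : g.Yields [.nonterminal A] m) (k : ℕ) :
    g.Yields [.nonterminal A] (m + k * d) := by
  induction k with
  | zero => simpa using hx
  | succ k ih => simpa [Nat.succ_mul, Nat.add_assoc] using h _ ih

end Embeds

def Descends (A : g.NT) (n : ℕ) : Prop :=
  g.outputBound ≤ n → ∃ B x, g.Yields [.nonterminal B] x ∧ x < n ∧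
    n ≤ g.outputBound * (x + 1) ∧ g.Embeds B [.nonterminal A] (n - x)

def HeavyChild (α : List (Symbol Unit g.NT)) (n : ℕ) : Prop :=
  ∃ B x, g.Yields [.nonterminal B] x ∧ g.Descends B x ∧ x ≤ n ∧
    n ≤ α.length * (x + 1) ∧ g.Embeds B α (n - x)

theorem descends_of_heavyChild {r : ContextFreeRule Unit g.NT} (hr : r ∈ g.rules)
    (h : n ≤ r.output.length ∨ g.HeavyChild r.output n) : g.Descends r.input n := by
  intro hn
  have hlen := length_output_lt_outputBound hr
  obtain h | ⟨B, x, hB, hBdesc, hxn, hbound, hemb⟩ := h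
  · omega
  have hemb := hemb.singleton hr
  have hbound : n ≤ g.outputBound * (x + 1) :=
    hbound.trans (Nat.mul_le_mul_right _ hlen.le)
  obtain hxn | rfl := hxn.lt_or_eq
  · exact ⟨B, x, hB, hxn, hbound, hemb⟩
  -- The heavy child has the same yield, so the strict descent happens further down.
  obtain ⟨C, z, hC, hzx, hxz, hCB⟩ := hBdesc hn
  refine ⟨C, z, hC, hzx, hxz, ?_⟩
  simpa [Nat.sub_add_cancel hzx.le] using hCB.trans hemb

theorem Yields.heavyChild (h : g.Yields α n) : n ≤ α.length ∨ g.HeavyChild α n := by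
  induction h with
  | nil => simp
  | @terminal α n _ ih =>
    obtain ih | ⟨B, x, hB, hBdesc, hxn, hbound, hemb⟩ := ih
    · left; simpa using ih
    · right
      refine ⟨B, x, hB, hBdesc, by omega, ?_, ?_⟩
      · simp only [List.length_cons]; nlinarith
      · simpa [Nat.sub_add_comm hxn] using hemb.cons_terminal
  | @nonterminal r α m n hr hout hα ihout ihα =>
    have hA : g.Yields [.nonterminal r.input] m := Yields.singleton hr hout
    right
    by_cases hle : n ≤ α.length * (m + 1)
    · refine ⟨r.input, m, hA, descends_of_heavyChild hr ihout, by omega, ?_, ?_⟩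
      · simp only [List.length_cons]; nlinarith
      · simpa using Embeds.head hα
    obtain hnα | ⟨B, x, hB, hBdesc, hxn, hbound, hemb⟩ := ihα
    · exact absurd (hnα.trans (Nat.le_mul_of_pos_right _ (Nat.succ_pos m))) hle
    have hmx : m < x := by
      by_contra! hxm
      exact hle (hbound.trans (Nat.mul_le_mul_left _ (by omega)))
    refine ⟨B, x, hB, hBdesc, by omega, ?_, ?_⟩
    · simp only [List.length_cons]; nlinarith
    · simpa [Nat.add_sub_assoc hxn] using hemb.cons_nonterminal hA

theorem Yields.descends {A : g.NT} (h : g.Yields [.nonterminal A] n) : g.Descends A n := by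
  obtain ⟨r, hr, rfl, hout⟩ := h.exists_rule
  exact descends_of_heavyChild hr hout.heavyChild

def levelBound (g : ContextFreeGrammar Unit) : ℕ → ℕ
  | 0 => 0
  | j + 1 => g.outputBound * (g.levelBound j + 1)

theorem strictMono_levelBound : StrictMono g.levelBound :=
  strictMono_nat_of_lt_succ fun j => by
    have : 0 < g.outputBound := Nat.succ_pos _
    simp only [levelBound]
    nlinarith

theorem outputBound_le_levelBound {j : ℕ} (hj : 0 < j) : g.outputBound ≤ g.levelBound j := by
  simpa [levelBound] using strictMono_levelBound.monotone (Nat.one_le_iff_ne_zero.mpr hj.ne')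

theorem lt_of_levelBound_succ_lt {j x : ℕ} (hn : g.levelBound (j + 1) < n)
    (hnx : n ≤ g.outputBound * (x + 1)) : g.levelBound j < x :=
  Nat.lt_of_add_lt_add_right (Nat.lt_of_mul_lt_mul_left (hn.trans_le hnx))

def pumpingBound (g : ContextFreeGrammar Unit) : ℕ := g.levelBound (g.rules.card + 1)

def Pumpable (A : g.NT) (n p : ℕ) : Prop :=
  ∃ d, 0 < d ∧ d ≤ p ∧ ∀ k, g.Yields [.nonterminal A] (n + k * d)

theorem Pumpable.of_embeds {A B : g.NT} {x e p : ℕ} (h : g.Pumpable B x p)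
    (hemb : g.Embeds B [.nonterminal A] e) : g.Pumpable A (x + e) p := by
  obtain ⟨d, hd, hdp, hpump⟩ := h
  exact ⟨d, hd, hdp, fun k => by simpa [Nat.add_right_comm] using hemb _ (hpump k)⟩

theorem Pumpable.add_factorial {A : g.NT} {p : ℕ} (h : g.Pumpable A n p) :
    g.Yields [.nonterminal A] (n + p !) := by
  obtain ⟨d, hd, hdp, hpump⟩ := h
  simpa [Nat.div_mul_cancel (Nat.dvd_factorial hd hdp)] using hpump (p ! / d)

theorem card_le_card_rules (S : Finset g.NT) (hS : ∀ C ∈ S, ∃ r ∈ g.rules, r.input = C) :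
    S.card ≤ g.rules.card :=
  Finset.card_le_card_of_surjOn ContextFreeRule.input fun C hC => by
    obtain ⟨r, hr, rfl⟩ := hS C hC
    exact ⟨r, hr, rfl⟩

theorem pumpable_of_ancestors {A : g.NT} {j : ℕ} (S : Finset g.NT)
    (hS : ∀ C ∈ S, ∃ r ∈ g.rules, r.input = C) (hcard : S.card + j = g.rules.card)
    (hA : g.Yields [.nonterminal A] n) (hn : g.levelBound j < n)
    (hanc : ∀ C ∈ S, ∃ v, n < v ∧ v ≤ g.pumpingBound ∧
      g.Embeds A [.nonterminal C] (v - n)) :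
    g.Pumpable A n g.pumpingBound := by
  classical
  induction n using Nat.strong_induction_on generalizing S j A with
  | _ n ih =>
  by_cases hAS : A ∈ S
  · obtain ⟨v, hnv, hvp, hemb⟩ := hanc A hAS
    exact ⟨v - n, by omega, by omega, hemb.pump hA⟩
  have hAin : ∃ r ∈ g.rules, r.input = A := by
    obtain ⟨r, hr, hrA, -⟩ := hA.exists_rule
    exact ⟨r, hr, hrA⟩
  have hS' : ∀ C ∈ insert A S, ∃ r ∈ g.rules, r.input = C := by
    simpa [Finset.forall_mem_insert] using And.intro hAin hS
  have hj : 0 < j := by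
    have := card_le_card_rules _ hS'
    rw [Finset.card_insert_of_notMem hAS] at this
    omega
  obtain ⟨B, x, hB, hxn, hnx, hemb⟩ :=
    hA.descends ((outputBound_le_levelBound hj).trans hn.le)
  rw [← Nat.add_sub_cancel' hxn.le]
  refine Pumpable.of_embeds ?_ hemb
  have hanc' (C : g.NT) (hC : C ∈ S) :
      ∃ v, x < v ∧ v ≤ g.pumpingBound ∧ g.Embeds B [.nonterminal C] (v - x) := by
    obtain ⟨v, hnv, hvp, hCemb⟩ := hanc C hC
    refine ⟨v, by omega, hvp, ?_⟩
    simpa [show n - x + (v - n) = v - x by omega] using hemb.trans hCemb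
  by_cases hnp : n ≤ g.pumpingBound
  -- Within the window below the pumping bound, `A` becomes an ancestor of `B`.
  · obtain ⟨j, rfl⟩ := Nat.exists_eq_add_of_lt hj
    refine ih x hxn (insert A S) hS' ?_ hB (lt_of_levelBound_succ_lt (by simpa using hn) hnx) ?_
    · rw [Finset.card_insert_of_notMem hAS]; omega
    · simpa [Finset.forall_mem_insert] using And.intro ⟨n, hxn, hnp, hemb⟩ hanc'
  · have hlev : g.levelBound j ≤ g.levelBound g.rules.card :=
      strictMono_levelBound.monotone (by omega)
    exact ih x hxn S hS hcard hB
      (hlev.trans_lt (lt_of_levelBound_succ_lt (not_le.mp hnp) hnx)) hanc'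

theorem Yields.pumpable {A : g.NT} (hA : g.Yields [.nonterminal A] n)
    (hn : g.levelBound g.rules.card < n) : g.Pumpable A n g.pumpingBound :=
  pumpable_of_ancestors ∅ (by simp) (by simp) hA hn (by simp)

end ContextFreeGrammar

/-- Every context-free language over a one-letter (unary) alphabet is regular. -/
theorem unary_contextFree_isRegular (L : Language Unit)
    (hL : L.IsContextFree) : L.IsRegular := by
  obtain ⟨g, rfl⟩ := hL
  refine Language.isRegular_of_replicate_mem_add (N := g.levelBound g.rules.card + 1)
    (Nat.factorial_pos g.pumpingBound) fun n hn hmem => ?_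
  rw [ContextFreeGrammar.replicate_mem_language_iff] at hmem ⊢
  exact (hmem.pumpable hn).add_factorial
end

section
/- Let T be a Turing machine and let S_H be the one-sided column subshift over alphabet Q' = A ⊔ (A × Q) obtained by observing cell 0 of the moving-head system T_H. If z ∈ S_H is a periodic word of period p in which the head (a letter from A × Q) occurs infinitely often, then z is isolated in S_H; more precisely, the cylinder of length |Q|·|A|^{p+1}·(p+1)^2 + 1 around z contains only z. -/
namespace TuringMachine

variable {A Q : Type*}

/-- Alphabet of the moving-head system: a tape letter, or a tape letter marked
with the head together with its state. -/
abbrev Cell (A Q : Type*) := A ⊕ (A × Q)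

/-- A cell carries the head. -/
def isHead {A Q : Type*} (b : Cell A Q) : Prop := ∃ p : A × Q, b = Sum.inr p

/-- Membership in the moving-head phase space X_H: at most one marked cell. -/
def XHmem (x : ℤ → Cell A Q) : Prop :=
  Set.Subsingleton {i : ℤ | isHead (x i)}

/-- One step of the moving-head system T_H on (A ⊔ (A × Q))^ℤ: if there is a
head, apply the rule of the machine at the marked cell (write, change state, and
move the mark by ±1); otherwise do nothing. -/
noncomputable def hstep (M : TuringMachine A Q) (x : ℤ → Cell A Q) :
    ℤ → Cell A Q := by
  classical
  exact if h : ∃ i : ℤ, ∃ b : A, ∃ q : Q, x i = Sum.inr (b, q) then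
    let i := h.choose
    let b := h.choose_spec.choose
    let q := h.choose_spec.choose_spec.choose
    let r := M.δ b q
    let y := Function.update x i (Sum.inl r.1)
    let j := i + dir r.2.2
    Function.update y j
      (match y j with
        | Sum.inl c => Sum.inr (c, r.2.1)
        | Sum.inr (c, _) => Sum.inr (c, r.2.1))
  else x

/-- The column observed at cell 0, defining the subshift S_H. -/
noncomputable def tauH (M : TuringMachine A Q) (x : ℤ → Cell A Q) (t : ℕ) :
    Cell A Q :=
  ((M.hstep)^[t] x) 0

/-- The language of finite factors of the column subshift S_H. -/
noncomputable def langSH (M : TuringMachine A Q) : Language (Cell A Q) :=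
  {w : List (Cell A Q) | ∃ x : ℤ → Cell A Q, XHmem x ∧ ∃ m : ℕ,
    ∀ j : ℕ, ∀ hj : j < w.length, w.get ⟨j, hj⟩ = M.tauH x (m + j)}

end TuringMachine

/-!
Let `z'` be a column of `S_H` agreeing with `z` on a long initial segment. Since `z` sees the head
at some time `t₀ < p` and is `p`-periodic, the head of the configuration underlying `z'` is at cell 0
at the times `t₀ + k p` for `k ≤ B = |Q|·|A|^(p+1)`, so in between it stays within `p / 2` of cell 0.
There the machine only reads the window `[-p/2, p/2]`, which with the state has at most `B` values;
by pigeonhole two visit times see the same window state, from then on the window evolves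
periodically, and `z'` is eventually periodic with a multiple of `p` as period. Two eventually
periodic sequences with a common period that agree for one period past the onset are equal.
-/

namespace TuringMachine

variable {A Q : Type*}

def toCells (c : Config A Q) : ℤ → Cell A Q :=
  fun j => if j = c.2.2 then Sum.inr (c.1 j, c.2.1) else Sum.inl (c.1 j)

lemma toCells_self (c : Config A Q) : toCells c c.2.2 = Sum.inr (c.1 c.2.2, c.2.1) :=
  if_pos rfl

lemma toCells_of_ne (c : Config A Q) {j : ℤ} (h : j ≠ c.2.2) : toCells c j = Sum.inl (c.1 j) :=
  if_neg h

lemma isHead_toCells_iff (c : Config A Q) (j : ℤ) : isHead (toCells c j) ↔ j = c.2.2 := by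
  by_cases h : j = c.2.2
  · simp [h, toCells_self, isHead]
  · simp [h, toCells_of_ne, isHead]

lemma dir_ne_zero (b : Bool) : dir b ≠ 0 := by cases b <;> simp [dir]

lemma exists_hstep_eq (M : TuringMachine A Q) {x : ℤ → Cell A Q}
    (hx : ∃ i : ℤ, ∃ b : A, ∃ q : Q, x i = Sum.inr (b, q)) :
    ∃ (i : ℤ) (b : A) (q : Q), x i = Sum.inr (b, q) ∧
      M.hstep x =
        let y := Function.update x i (Sum.inl (M.δ b q).1)
        Function.update y (i + dir (M.δ b q).2.2)
          (match y (i + dir (M.δ b q).2.2) with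
            | Sum.inl c => Sum.inr (c, (M.δ b q).2.1)
            | Sum.inr (c, _) => Sum.inr (c, (M.δ b q).2.1)) := by
  classical
  exact ⟨_, _, _, hx.choose_spec.choose_spec.choose_spec, by unfold hstep; rw [dif_pos hx]⟩

lemma hstep_toCells (M : TuringMachine A Q) (c : Config A Q) :
    M.hstep (toCells c) = toCells (M.step c) := by
  obtain ⟨i, b, q, hhead, hstep_eq⟩ := M.exists_hstep_eq ⟨c.2.2, _, _, toCells_self c⟩
  obtain rfl : i = c.2.2 := (isHead_toCells_iff c i).1 ⟨_, hhead⟩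
  obtain ⟨rfl, rfl⟩ : c.1 c.2.2 = b ∧ c.2.1 = q := by simpa [toCells_self] using hhead
  have hne := dir_ne_zero (M.δ (c.1 c.2.2) c.2.1).2.2
  rw [hstep_eq]
  funext k
  simp only [toCells, step, Function.update_apply]
  split_ifs <;> first | omega | simp_all

lemma iterate_hstep_toCells (M : TuringMachine A Q) (c : Config A Q) (t : ℕ) :
    M.hstep^[t] (toCells c) = toCells (M.step^[t] c) :=
  (Function.Semiconj.iterate_right (fun c => (hstep_toCells M c).symm) t c).symm

lemma hstep_of_forall_not_isHead (M : TuringMachine A Q) {x : ℤ → Cell A Q}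
    (hx : ∀ i, ¬ isHead (x i)) : M.hstep x = x := by
  classical
  unfold hstep
  exact dif_neg fun ⟨i, b, q, hi⟩ => hx i ⟨_, hi⟩

lemma exists_eq_toCells {x : ℤ → Cell A Q} (hx : XHmem x) {i : ℤ} (hi : isHead (x i)) :
    ∃ c : Config A Q, x = toCells c := by
  obtain ⟨⟨b, q⟩, hbq⟩ := hi
  refine ⟨(fun j => Sum.elim id Prod.fst (x j), q, i), funext fun j => ?_⟩
  by_cases hj : j = i
  · subst hj
    simp [toCells, hbq]
  · rw [toCells_of_ne _ hj]
    cases hxj : x j with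
    | inl a => simp [hxj]
    | inr r => exact absurd (hx ⟨r, hxj⟩ ⟨_, hbq⟩) hj

lemma exists_tauH_eq_toCells (M : TuringMachine A Q) {x : ℤ → Cell A Q} (hx : XHmem x)
    {t : ℕ} (ht : isHead (M.tauH x t)) :
    ∃ c : Config A Q, ∀ s, M.tauH x s = toCells (M.step^[s] c) 0 := by
  by_cases hhead : ∃ i, isHead (x i)
  · obtain ⟨i, hi⟩ := hhead
    obtain ⟨c, rfl⟩ := exists_eq_toCells hx hi
    exact ⟨c, fun s => congrFun (iterate_hstep_toCells M c s) 0⟩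
  · push Not at hhead
    rw [tauH, Function.iterate_fixed (M.hstep_of_forall_not_isHead hhead)] at ht
    exact absurd ht (hhead 0)

lemma abs_pos_succ_sub (M : TuringMachine A Q) (c : Config A Q) (t : ℕ) :
    |M.pos (t + 1) c - M.pos t c| = 1 := by
  rw [pos, pos, Function.iterate_succ_apply']
  generalize M.step^[t] c = d
  show |d.2.2 + dir _ - d.2.2| = 1
  rw [add_sub_cancel_left]
  cases (M.δ (d.1 d.2.2) d.2.1).2.2 <;> simp [dir]

lemma abs_pos_sub_le (M : TuringMachine A Q) (c : Config A Q) {s t : ℕ} (hst : s ≤ t) :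
    |M.pos t c - M.pos s c| ≤ t - s := by
  induction t, hst using Nat.le_induction with
  | base => simp
  | succ t hst ih =>
    calc |M.pos (t + 1) c - M.pos s c|
        ≤ |M.pos (t + 1) c - M.pos t c| + |M.pos t c - M.pos s c| := abs_sub_le _ _ _
      _ ≤ (t + 1 : ℕ) - s := by rw [abs_pos_succ_sub]; push_cast; linarith

lemma abs_pos_le_of_return (M : TuringMachine A Q) (c : Config A Q) {s t p : ℕ}
    (hs : M.pos s c = 0) (hsp : M.pos (s + p) c = 0) (hst : s ≤ t) (hts : t ≤ s + p) :
    |M.pos t c| ≤ (p / 2 : ℕ) := by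
  have h₁ := M.abs_pos_sub_le c hst
  have h₂ := M.abs_pos_sub_le c hts
  rw [hs, sub_zero] at h₁
  rw [hsp, zero_sub, abs_neg] at h₂
  push_cast at h₁ h₂
  rw [abs_le] at h₁ h₂ ⊢
  omega

lemma abs_pos_le_of_visits (M : TuringMachine A Q) (c : Config A Q) {s p B t : ℕ}
    (hvisit : ∀ k ≤ B, M.pos (s + k * p) c = 0) (hst : s ≤ t) (hts : t ≤ s + B * p) :
    |M.pos t c| ≤ (p / 2 : ℕ) := by
  induction B with
  | zero =>
    obtain rfl : t = s := by omega
    have h₀ := hvisit 0 le_rfl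
    rw [zero_mul, add_zero] at h₀
    rw [h₀, abs_zero]
    positivity
  | succ B ih =>
    by_cases ht : t ≤ s + B * p
    · exact ih (fun k hk => hvisit k (by omega)) ht
    · refine M.abs_pos_le_of_return c (hvisit B (by omega)) ?_ (by omega)
        (by linarith [Nat.succ_mul B p])
      rw [add_assoc, ← Nat.succ_mul]
      exact hvisit (B + 1) le_rfl

lemma pos_iterate (M : TuringMachine A Q) (c : Config A Q) (m n : ℕ) :
    M.pos n (M.step^[m] c) = M.pos (n + m) c := by
  rw [pos, pos, Function.iterate_add_apply]

def WindowEq (h : ℕ) (c d : Config A Q) : Prop :=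
  c.2 = d.2 ∧ ∀ j : ℤ, |j| ≤ h → c.1 j = d.1 j

lemma WindowEq.step (M : TuringMachine A Q) {h : ℕ} {c d : Config A Q} (hcd : WindowEq h c d)
    (hc : |c.2.2| ≤ h) : WindowEq h (M.step c) (M.step d) := by
  obtain ⟨tc, q, i⟩ := c
  obtain ⟨td, _, _⟩ := d
  obtain ⟨hhead, htape⟩ := hcd
  obtain ⟨rfl, rfl⟩ := Prod.mk.inj hhead
  have hread : tc i = td i := htape i hc
  refine ⟨by simp only [TuringMachine.step, hread], fun j hj => ?_⟩
  simp only [TuringMachine.step, Function.update_apply, hread]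
  split_ifs
  · rfl
  · exact htape j hj

lemma WindowEq.toCells_zero {h : ℕ} {c d : Config A Q} (hcd : WindowEq h c d) :
    toCells c 0 = toCells d 0 := by
  simp only [toCells, hcd.1, hcd.2 0 (by simp)]

/-- Joint induction: the window state propagates while the head is inside the window, and for
`n ≥ q` the agreement at time `n - q` puts the head back inside. -/
lemma windowEq_iterate_add (M : TuringMachine A Q) {h q : ℕ} {c : Config A Q} (hq : 0 < q)
    (hconf : ∀ n < q, |M.pos n c| ≤ h) (hc : WindowEq h c (M.step^[q] c)) (n : ℕ) :
    WindowEq h (M.step^[n] c) (M.step^[n + q] c) ∧ |M.pos n c| ≤ h := by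
  induction n using Nat.strong_induction_on with
  | _ n ih =>
    cases n with
    | zero => exact ⟨by simpa using hc, hconf 0 hq⟩
    | succ n =>
      have hn := ih n n.lt_succ_self
      refine ⟨?_, ?_⟩
      · rw [Function.iterate_succ_apply', show n + 1 + q = n + q + 1 by omega,
          Function.iterate_succ_apply']
        exact hn.1.step M hn.2
      · by_cases hnq : n + 1 < q
        · exact hconf _ hnq
        · have hm := ih (n + 1 - q) (by omega)
          have hpos : M.pos (n + 1 - q) c = M.pos (n + 1) c := by
            rw [pos, pos, congrArg Prod.snd hm.1.1, Nat.sub_add_cancel (by omega)]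
          exact hpos ▸ hm.2

lemma exists_windowEq_of_card_le [Fintype A] [Fintype Q] (h B : ℕ) (d : ℕ → Config A Q) {i : ℤ}
    (hB : Fintype.card Q * Fintype.card A ^ (2 * h + 1) ≤ B) (hpos : ∀ k ≤ B, (d k).2.2 = i) :
    ∃ k l, k < l ∧ l ≤ B ∧ WindowEq h (d k) (d l) := by
  classical
  let W := Finset.Icc (-(h : ℤ)) h
  let f : ℕ → (W → A) × Q := fun k => (fun j => (d k).1 j, (d k).2.1)
  have hW : W.card = 2 * h + 1 := by simp only [W, Int.card_Icc]; omega
  have hcard : (Finset.univ : Finset ((W → A) × Q)).card < (Finset.range (B + 1)).card := by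
    simp only [Finset.card_univ, Fintype.card_prod, Fintype.card_fun, Fintype.card_coe,
      hW, Finset.card_range]
    linarith [Nat.mul_comm (Fintype.card Q) (Fintype.card A ^ (2 * h + 1))]
  obtain ⟨k, hk, l, hl, hkl, hf⟩ :=
    Finset.exists_ne_map_eq_of_card_lt_of_maps_to hcard (f := f) fun _ _ => Finset.mem_univ _
  rw [Finset.mem_range] at hk hl
  wlog hlt : k < l generalizing k l
  · exact this l hl k hk hkl.symm hf.symm (by omega)
  refine ⟨k, l, hlt, by omega, Prod.ext (congrArg Prod.snd hf) ?_, fun j hj => ?_⟩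
  · rw [hpos k (by omega), hpos l (by omega)]
  · exact congrFun (congrArg Prod.fst hf) ⟨j, Finset.mem_Icc.2 (abs_le.1 hj)⟩

lemma exists_periodic_tail_of_visits [Fintype A] [Fintype Q] (M : TuringMachine A Q)
    (c : Config A Q) {s p B : ℕ} (hp : 0 < p)
    (hB : Fintype.card Q * Fintype.card A ^ (p + 1) ≤ B)
    (hvisit : ∀ k ≤ B, M.pos (s + k * p) c = 0) :
    ∃ s' m, 0 < m ∧ s' + m * p ≤ s + B * p ∧
      ∀ t ≥ s', toCells (M.step^[t + m * p] c) 0 = toCells (M.step^[t] c) 0 := by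
  have hA : 1 ≤ Fintype.card A := Fintype.card_pos_iff.2 ⟨c.1 0⟩
  have hB' : Fintype.card Q * Fintype.card A ^ (2 * (p / 2) + 1) ≤ B :=
    le_trans (Nat.mul_le_mul_left _ (Nat.pow_le_pow_right hA (by omega))) hB
  obtain ⟨k, l, hkl, hlB, hwin⟩ :=
    exists_windowEq_of_card_le (p / 2) B (fun k => M.step^[s + k * p] c) hB' hvisit
  have hlk : s + k * p + (l - k) * p = s + l * p := by
    rw [add_assoc, ← Nat.add_mul, Nat.add_sub_cancel' hkl.le]
  have hlp : s + l * p ≤ s + B * p := by gcongr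
  have hperiodic := windowEq_iterate_add M (c := M.step^[s + k * p] c) (q := (l - k) * p)
    (Nat.mul_pos (by omega) hp)
    (fun n hn => by
      rw [pos_iterate]
      exact M.abs_pos_le_of_visits c hvisit (by omega) (by omega))
    (by rwa [← Function.iterate_add_apply, show (l - k) * p + (s + k * p) = s + l * p by omega])
  refine ⟨s + k * p, l - k, by omega, by omega, fun t ht => ?_⟩
  obtain ⟨n, rfl⟩ := Nat.exists_eq_add_of_le ht
  have h := (hperiodic n).1.toCells_zero
  rwa [← Function.iterate_add_apply, ← Function.iterate_add_apply, eq_comm,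
    show n + (l - k) * p + (s + k * p) = s + k * p + n + (l - k) * p by ring,
    show n + (s + k * p) = s + k * p + n by ring] at h

end TuringMachine

lemma eq_of_eqOn_of_eventually_periodic {α : Type*} {f g : ℕ → α} {s q : ℕ} (hq : 0 < q)
    (hf : ∀ t ≥ s, f (t + q) = f t) (hg : ∀ t ≥ s, g (t + q) = g t)
    (hfg : ∀ t < s + q, f t = g t) : f = g := by
  funext t
  induction t using Nat.strong_induction_on with
  | _ t ih =>
    by_cases ht : t < s + q
    · exact hfg t ht
    · obtain ⟨u, rfl⟩ : ∃ u, t = u + q := ⟨t - q, by omega⟩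
      rw [hf u (by omega), hg u (by omega), ih u (by omega)]

theorem periodic_column_with_head_isolated_general
    {A Q : Type*} [Fintype A] [Fintype Q]
    (M : TuringMachine A Q) (z : ℕ → TuringMachine.Cell A Q) (p : ℕ)
    (hp : 0 < p) (hper : ∀ t : ℕ, z (t + p) = z t)
    (hhead : ∀ t : ℕ, ∃ s : ℕ, t ≤ s ∧ TuringMachine.isHead (z s)) :
    ∀ z' : ℕ → TuringMachine.Cell A Q,
      (∃ x : ℤ → TuringMachine.Cell A Q,
        TuringMachine.XHmem x ∧ ∀ t : ℕ, M.tauH x t = z' t) →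
      (∀ t ≤ Fintype.card Q * Fintype.card A ^ (p + 1) * (p + 1) ^ 2,
        z' t = z t) →
      z' = z := by
  intro z' ⟨x, hx, hz'⟩ hzz'
  have hper : Function.Periodic z p := hper
  obtain ⟨t₀, ht₀, ⟨a, q⟩, hz₀⟩ : ∃ t₀ < p, TuringMachine.isHead (z t₀) := by
    obtain ⟨s, -, hs⟩ := hhead 0
    exact ⟨s % p, Nat.mod_lt s hp, hper.map_mod_nat s ▸ hs⟩
  have hperk (k : ℕ) : Function.Periodic z (k * p) := by simpa using hper.nat_mul k
  set B := Fintype.card Q * Fintype.card A ^ (p + 1)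
  have hBN : t₀ + B * p ≤ B * (p + 1) ^ 2 := by
    have hB : 0 < B :=
      Nat.mul_pos (Fintype.card_pos_iff.2 ⟨q⟩) (Nat.pow_pos (Fintype.card_pos_iff.2 ⟨a⟩))
    have : p ≤ B * p := Nat.le_mul_of_pos_left p hB
    nlinarith
  have hvisit : ∀ k ≤ B, TuringMachine.isHead (M.tauH x (t₀ + k * p)) := fun k hk => by
    rw [hz', hzz' _ (by nlinarith), hperk k, hz₀]
    exact ⟨_, rfl⟩
  obtain ⟨c, hc⟩ := M.exists_tauH_eq_toCells hx (hvisit 0 (Nat.zero_le _))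
  have hpos k (hk : k ≤ B) : M.pos (t₀ + k * p) c = 0 :=
    ((TuringMachine.isHead_toCells_iff _ 0).1 (hc _ ▸ hvisit k hk)).symm
  obtain ⟨s, m, hm, hsm, hcol⟩ := M.exists_periodic_tail_of_visits c (B := B) hp le_rfl hpos
  exact eq_of_eqOn_of_eventually_periodic (Nat.mul_pos hm hp)
    (fun t ht => by rw [← hz', ← hz', hc, hc, hcol t ht]) (fun t _ => hperk m t)
    (fun t ht => hzz' t (by omega))

/-- A periodic column word of S_H in which the head occurs infinitely often is
isolated: the cylinder of length $|Q|·|A|^{p+1}·(p+1)^2 + 1$ around it contains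
no other point of S_H. -/
theorem periodic_column_with_head_isolated
    {A Q : Type*} [Fintype A] [Fintype Q]
    (M : TuringMachine A Q) (z : ℕ → TuringMachine.Cell A Q) (p : ℕ)
    (hp : 0 < p) (hper : ∀ t : ℕ, z (t + p) = z t)
    (hhead : ∀ t : ℕ, ∃ s : ℕ, t ≤ s ∧ TuringMachine.isHead (z s))
    (hz : ∃ x : ℤ → TuringMachine.Cell A Q,
      TuringMachine.XHmem x ∧ ∀ t : ℕ, M.tauH x t = z t) :
    ∀ z' : ℕ → TuringMachine.Cell A Q,
      (∃ x : ℤ → TuringMachine.Cell A Q,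
        TuringMachine.XHmem x ∧ ∀ t : ℕ, M.tauH x t = z' t) →
      (∀ t ≤ Fintype.card Q * Fintype.card A ^ (p + 1) * (p + 1) ^ 2,
        z' t = z t) →
      z' = z :=
  periodic_column_with_head_isolated_general M z p hp hper hhead
end

section
/- Let F : A^ℤ → A^ℤ be a cellular automaton (continuous and shift-commuting). Then F is equicontinuous if and only if F is preperiodic, i.e., there exist q ≥ 0 and p > 0 with F^{q+p} = F^q. -/
/-!
If `F` is preperiodic, only the finitely many iterates `F^[s]`, `s < q + p`, occur, and each
coordinate of each of them is continuous into a discrete space, hence (by compactness of `A^ℤ`)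
depends on a bounded window: one window serves all times. Conversely, if a single window of radius
`m` controls the centre cell of every iterate, then, by shift invariance, `F^[t]` is determined by
its local rule on `[-m, m]`; there are only finitely many such rules, so two iterates coincide.
-/

open Function Set Topology

theorem Continuous.exists_finset_eq_of_eqOn {ι A B : Type*} [TopologicalSpace A]
    [DiscreteTopology A] [CompactSpace A] [TopologicalSpace B] [DiscreteTopology B]
    {f : (ι → A) → B} (hf : Continuous f) :
    ∃ S : Finset ι, ∀ x y, EqOn x y S → f x = f y := by
  classical
  have hlocal : ∀ x, ∃ S : Finset ι, ∀ y, EqOn y x S → f y = f x := by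
    intro x
    have hx : f ⁻¹' {f x} ∈ 𝓝 x :=
      hf.continuousAt.preimage_mem_nhds ((isOpen_discrete _).mem_nhds rfl)
    rw [nhds_pi, Filter.mem_pi] at hx
    obtain ⟨I, hI, t, ht, hsub⟩ := hx
    refine ⟨hI.toFinset, fun y hy => hsub fun i hi => ?_⟩
    rw [hy (hI.mem_toFinset.2 hi)]
    exact mem_of_mem_nhds (ht i)
  choose S hS using hlocal
  have hnhds : ∀ x ∈ univ, (S x : Set ι).pi (fun i => {x i}) ∈ 𝓝 x := fun x _ =>
    set_pi_mem_nhds (S x).finite_toSet fun i _ => (isOpen_discrete _).mem_nhds rfl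
  obtain ⟨t, -, hcover⟩ := isCompact_univ.elim_nhds_subcover _ hnhds
  refine ⟨t.biUnion S, fun x y hxy => ?_⟩
  obtain ⟨z, hz, hxz⟩ := mem_iUnion₂.1 (hcover (mem_univ x))
  have hyz : EqOn y z (S z) := fun i hi =>
    (hxy (Finset.mem_coe.2 (Finset.mem_biUnion.2 ⟨z, hz, hi⟩))).symm.trans (hxz i hi)
  exact (hS z x hxz).trans (hS z y hyz).symm

theorem Continuous.exists_window_eq {A B : Type*} [TopologicalSpace A] [DiscreteTopology A]
    [CompactSpace A] [TopologicalSpace B] [DiscreteTopology B] {f : (ℤ → A) → B}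
    (hf : Continuous f) :
    ∃ m : ℕ, ∀ x y : ℤ → A, (∀ i : ℤ, |i| ≤ (m : ℤ) → x i = y i) → f x = f y := by
  obtain ⟨S, hS⟩ := hf.exists_finset_eq_of_eqOn
  refine ⟨S.sup Int.natAbs, fun x y hxy => hS x y fun i hi => hxy i ?_⟩
  rw [Int.abs_eq_natAbs]
  exact_mod_cast Finset.le_sup (f := Int.natAbs) hi

theorem Function.exists_lt_iterate_eq_of_iterate_add_eq {α : Type*} {f : α → α} {q p : ℕ}
    (hp : 0 < p) (h : f^[q + p] = f^[q]) (t : ℕ) : ∃ s < q + p, f^[t] = f^[s] := by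
  induction t using Nat.strong_induction_on with
  | _ t ih =>
    by_cases ht : t < q + p
    · exact ⟨t, ht, rfl⟩
    have hdrop : f^[t] = f^[t - p] := by
      calc f^[t] = f^[t - (q + p)] ∘ f^[q + p] := by rw [← iterate_add]; congr 1; omega
        _ = f^[t - (q + p)] ∘ f^[q] := by rw [h]
        _ = f^[t - p] := by rw [← iterate_add]; congr 1; omega
    obtain ⟨s, hs, hts⟩ := ih (t - p) (by omega)
    exact ⟨s, hs, hdrop.trans hts⟩

namespace CellularAutomaton

variable {A : Type*} {F : (ℤ → A) → ℤ → A}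

def shift (n : ℤ) (x : ℤ → A) : ℤ → A := fun i => x (i + n)

theorem shift_comp_shift (m n : ℤ) : shift m ∘ shift n = (shift (m + n) : (ℤ → A) → ℤ → A) := by
  funext x i
  simp only [comp_apply, shift, add_assoc]

theorem shift_zero : (shift 0 : (ℤ → A) → ℤ → A) = id := by
  funext x i
  simp [shift]

theorem commute_shift (h : Function.Commute F (shift 1)) (n : ℤ) :
    Function.Commute F (shift n) := by
  induction n using Int.induction_on with
  | zero => exact shift_zero (A := A) ▸ Function.Commute.id_right
  | succ n ih => exact shift_comp_shift (A := A) n 1 ▸ ih.comp_right h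
  | pred n ih =>
    have hinv : ∀ a b : ℤ, a + b = 0 → LeftInverse (shift a : (ℤ → A) → ℤ → A) (shift b) :=
      fun a b hab x => by rw [← comp_apply (f := shift a), shift_comp_shift, hab, shift_zero, id]
    have hneg : Function.Commute F (shift (-1)) :=
      h.inverses_right (hinv 1 (-1) (by norm_num)) (hinv (-1) 1 (by norm_num))
    rw [sub_eq_add_neg, ← shift_comp_shift]
    exact ih.comp_right hneg

theorem iterate_apply_eq_iterate_shift_apply_zero (h : Function.Commute F (shift 1))
    (t : ℕ) (x : ℤ → A) (j : ℤ) : F^[t] x j = F^[t] (shift j x) 0 := by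
  rw [(commute_shift h j).iterate_left t x]
  simp [shift]

variable (F) in
/-- Patterns on the window are extended to configurations by clamping coordinates into the
window with `Set.projIcc`, so that no default letter of `A` is needed. -/
def iterateLocalRule (m t : ℕ) : (Icc (-(m : ℤ)) m → A) → A :=
  fun w => F^[t] (w ∘ projIcc (-(m : ℤ)) m (by omega)) 0

theorem iterate_apply_eq_iterateLocalRule (h : Function.Commute F (shift 1))
    {m : ℕ} (hm : ∀ x y : ℤ → A, (∀ i : ℤ, |i| ≤ (m : ℤ) → x i = y i) →
      ∀ t : ℕ, F^[t] x 0 = F^[t] y 0)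
    (t : ℕ) (x : ℤ → A) (j : ℤ) :
    F^[t] x j = iterateLocalRule F m t (fun i => x (i + j)) := by
  rw [iterate_apply_eq_iterate_shift_apply_zero h]
  refine hm _ _ (fun i hi => ?_) t
  simp [shift, projIcc_of_mem _ (mem_Icc.2 (abs_le.1 hi))]

theorem exists_iterate_add_eq_of_uniform_window [Finite A]
    (h : Function.Commute F (shift 1)) {m : ℕ}
    (hm : ∀ x y : ℤ → A, (∀ i : ℤ, |i| ≤ (m : ℤ) → x i = y i) →
      ∀ t : ℕ, F^[t] x 0 = F^[t] y 0) :
    ∃ q p : ℕ, 0 < p ∧ F^[q + p] = F^[q] := by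
  obtain ⟨a, b, hab, hrule⟩ :=
    finite_univ.exists_lt_map_eq_of_forall_mem (f := iterateLocalRule F m) fun _ => mem_univ _
  refine ⟨a, b - a, by omega, ?_⟩
  rw [Nat.add_sub_cancel' hab.le]
  funext x j
  rw [iterate_apply_eq_iterateLocalRule h hm, iterate_apply_eq_iterateLocalRule h hm, hrule]

theorem uniform_window_of_iterate_add_eq [TopologicalSpace A] [DiscreteTopology A]
    [CompactSpace A] (hF : Continuous F) {q p : ℕ} (hp : 0 < p)
    (h : F^[q + p] = F^[q]) (k : ℕ) :
    ∃ m : ℕ, ∀ x y : ℤ → A, (∀ i : ℤ, |i| ≤ (m : ℤ) → x i = y i) →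
      ∀ t : ℕ, ∀ j : ℤ, |j| ≤ (k : ℤ) → F^[t] x j = F^[t] y j := by
  let Φ : (ℤ → A) → Fin (q + p) → Icc (-(k : ℤ)) k → A := fun x s j => F^[s] x j
  have hΦ : Continuous Φ :=
    continuous_pi fun s => continuous_pi fun j => (continuous_apply _).comp (hF.iterate s)
  obtain ⟨m, hm⟩ := hΦ.exists_window_eq
  refine ⟨m, fun x y hxy t j hj => ?_⟩
  obtain ⟨s, hs, hts⟩ := exists_lt_iterate_eq_of_iterate_add_eq hp h t
  rw [hts]
  exact congrFun (congrFun (hm x y hxy) ⟨s, hs⟩) ⟨j, mem_Icc.2 (abs_le.1 hj)⟩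

end CellularAutomaton

open CellularAutomaton in
/-- A cellular automaton (a continuous shift-commuting self-map of A^ℤ, A finite
discrete) is equicontinuous if and only if it is preperiodic.  Equicontinuity is
expressed through the cylinder metric d(x,y) = 2^{-min{|i| : x_i ≠ y_i}}. -/
theorem cellularAutomaton_equicontinuous_iff_preperiodic
    {A : Type*} [Fintype A] [TopologicalSpace A] [DiscreteTopology A]
    (F : (ℤ → A) → (ℤ → A)) (hcont : Continuous F)
    (hshift : ∀ x : ℤ → A, F (fun i => x (i + 1)) = fun i => F x (i + 1)) :
    (∀ k : ℕ, ∃ m : ℕ, ∀ x y : ℤ → A,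
        (∀ i : ℤ, |i| ≤ (m : ℤ) → x i = y i) →
        ∀ t : ℕ, ∀ j : ℤ, |j| ≤ (k : ℤ) → F^[t] x j = F^[t] y j) ↔
    (∃ q p : ℕ, 0 < p ∧ F^[q + p] = F^[q]) := by
  have hcomm : Function.Commute F (shift 1) := hshift
  constructor
  · intro hequi
    obtain ⟨m, hm⟩ := hequi 0
    exact exists_iterate_add_eq_of_uniform_window hcomm fun x y hxy t => hm x y hxy t 0 le_rfl
  · rintro ⟨q, p, hp, hqp⟩ k
    exact uniform_window_of_iterate_add_eq hcont hp hqp k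
end
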